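/- In the setting of the random batch pressure estimators, let k_1^r,…,k_P^r be i.i.d. samples from 𝒫^r and, independently, k_1^{nr},…,k_P^{nr} be i.i.d. samples from 𝒫^{nr}, and define the fluctuation χ = P^{F,r} + P^{F,nr} − P^{F,r*} − P^{F,nr*}, where P^{F,r*} = (S^r/(4 det(h)² P)) Σ_{p=1}^P (|ρ(k_p^r)|²/|k_p^r|²) I and P^{F,nr*} = −(S^{nr}/(8 det(h)² P)) Σ_{p=1}^P |ρ(k_p^{nr})|² (k_p^{nr} ⊗ k_p^{nr})/|k_p^{nr}|⁴. Then for all μ, ν ∈ {1,2,3}: E[χ_{μν}] = 0, and E|χ_{μν}|² ≤ (δ_{μν}/P)[ (π^{3/2} S^r / det(h)⁴) Σ_{k∈K} (Σ_ℓ w̃_ℓ s̃_ℓ⁵ e^{−s̃_ℓ²|k|²/4}) |ρ(k)|⁴/|k|² − |(P^{F,r})_{μν}|² ] + (1/P)[ (π^{3/2} S^{nr} /(36 det(h)⁴)) Σ_{k∈K} (Σ_ℓ w̃_ℓ s̃_ℓ⁷ e^{−s̃_ℓ²|k|²/4}) |ρ(k)|⁴ k_μ² k_ν² / |k|⁴ −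 |(P^{F,nr})_{μν}|² ], where K is the set of nonzero reciprocal vectors. -/

import Mathlib

open Real Matrix MeasureTheory ProbabilityTheory

/-- Squared Euclidean length of a vector in `Fin 3 → ℝ`. -/
noncomputable def nsq (v : Fin 3 → ℝ) : ℝ := ∑ i, v i ^ 2

/-- The reciprocal lattice vector `k_m = 2π h^{-⊤} m`. -/
noncomputable def recipVec (h : Matrix (Fin 3) (Fin 3) ℝ) (m : Fin 3 → ℤ) : Fin 3 → ℝ :=
  (2 * π) • (h⁻¹)ᵀ.mulVec fun i => (m i : ℝ)

/-- The structure factor `ρ(k) = Σ_i q_i e^{i k·r_i}`. -/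
noncomputable def structFactor {N : ℕ} (q : Fin N → ℝ) (r : Fin N → (Fin 3 → ℝ))
    (k : Fin 3 → ℝ) : ℂ :=
  ∑ i, ((q i : ℝ) : ℂ) * Complex.exp (Complex.I * ((k ⬝ᵥ r i : ℝ) : ℂ))

/-- Unnormalized radial sampling weight `Σ_ℓ π^{3/2} w̃_ℓ s̃_ℓ⁵ |k|² e^{-s̃_ℓ²|k|²/4}`. -/
noncomputable def radWeight (h : Matrix (Fin 3) (Fin 3) ℝ) {M : ℕ} (w s : Fin M → ℝ)
    (m : Fin 3 → ℤ) : ℝ :=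
  ∑ ℓ, π ^ ((3 : ℝ) / 2) * w ℓ * s ℓ ^ 5 * nsq (recipVec h m) *
    Real.exp (-s ℓ ^ 2 * nsq (recipVec h m) / 4)

/-- Unnormalized non-radial sampling weight `Σ_ℓ π^{3/2} w̃_ℓ s̃_ℓ⁷ |k|⁴ e^{-s̃_ℓ²|k|²/4}`. -/
noncomputable def nradWeight (h : Matrix (Fin 3) (Fin 3) ℝ) {M : ℕ} (w s : Fin M → ℝ)
    (m : Fin 3 → ℤ) : ℝ :=
  ∑ ℓ, π ^ ((3 : ℝ) / 2) * w ℓ * s ℓ ^ 7 * nsq (recipVec h m) ^ 2 *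
    Real.exp (-s ℓ ^ 2 * nsq (recipVec h m) / 4)

/-- Normalization constant `S^r`. -/
noncomputable def Sr (h : Matrix (Fin 3) (Fin 3) ℝ) {M : ℕ} (w s : Fin M → ℝ) : ℝ :=
  ∑' m : Fin 3 → ℤ, if m = 0 then 0 else radWeight h w s m

/-- Normalization constant `S^{nr}`. -/
noncomputable def Snr (h : Matrix (Fin 3) (Fin 3) ℝ) {M : ℕ} (w s : Fin M → ℝ) : ℝ :=
  ∑' m : Fin 3 → ℤ, if m = 0 then 0 else nradWeight h w s m

/-- Radial long-range pressure tensor `P^{F,r}` (component `μ ν`). -/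
noncomputable def PFr (h : Matrix (Fin 3) (Fin 3) ℝ) {N : ℕ} (q : Fin N → ℝ)
    (r : Fin N → (Fin 3 → ℝ)) {M : ℕ} (w s : Fin M → ℝ) (μ ν : Fin 3) : ℝ :=
  ((if μ = ν then 1 else 0) / (4 * h.det ^ 2)) *
    ∑' m : Fin 3 → ℤ,
      if m = 0 then 0 else
        (∑ ℓ, π ^ ((3 : ℝ) / 2) * w ℓ * s ℓ ^ 5 *
            Real.exp (-s ℓ ^ 2 * nsq (recipVec h m) / 4)) *
          Complex.normSq (structFactor q r (recipVec h m))

/-- Non-radial long-range pressure tensor `P^{F,nr}` (component `μ ν`). -/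
noncomputable def PFnr (h : Matrix (Fin 3) (Fin 3) ℝ) {N : ℕ} (q : Fin N → ℝ)
    (r : Fin N → (Fin 3 → ℝ)) {M : ℕ} (w s : Fin M → ℝ) (μ ν : Fin 3) : ℝ :=
  -(1 / (8 * h.det ^ 2)) *
    ∑' m : Fin 3 → ℤ,
      if m = 0 then 0 else
        (∑ ℓ, π ^ ((3 : ℝ) / 2) * w ℓ * s ℓ ^ 7 *
            Real.exp (-s ℓ ^ 2 * nsq (recipVec h m) / 4)) *
          Complex.normSq (structFactor q r (recipVec h m)) * recipVec h m μ * recipVec h m ν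

/-- Fluctuation `χ_{μν}` of the random batch pressure estimator of batch size `P`,
for batch samples `kr` (radial) and `knr` (non-radial) at outcome `ω`. -/
noncomputable def chi (h : Matrix (Fin 3) (Fin 3) ℝ) {N : ℕ} (q : Fin N → ℝ)
    (r : Fin N → (Fin 3 → ℝ)) {M : ℕ} (w s : Fin M → ℝ) {P : ℕ} {Ω : Type*}
    (kr knr : Fin P → Ω → (Fin 3 → ℤ)) (μ ν : Fin 3) (ω : Ω) : ℝ :=
  PFr h q r w s μ ν + PFnr h q r w s μ ν -
    ((if μ = ν then 1 else 0) * (Sr h w s / (4 * h.det ^ 2 * P)) *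
      ∑ p, Complex.normSq (structFactor q r (recipVec h (kr p ω))) /
        nsq (recipVec h (kr p ω))) -
    (-(Snr h w s / (8 * h.det ^ 2 * P)) *
      ∑ p, Complex.normSq (structFactor q r (recipVec h (knr p ω))) *
        recipVec h (knr p ω) μ * recipVec h (knr p ω) ν /
          nsq (recipVec h (knr p ω)) ^ 2)

lemma nsq_nonneg (v : Fin 3 → ℝ) : 0 ≤ nsq v :=
  Finset.sum_nonneg fun _ _ => sq_nonneg _

lemma sq_le_nsq (v : Fin 3 → ℝ) (i : Fin 3) : v i ^ 2 ≤ nsq v :=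
  Finset.single_le_sum (fun j _ => sq_nonneg (v j)) (Finset.mem_univ i)

lemma nsq_mulVec_le (B : Matrix (Fin 3) (Fin 3) ℝ) (v : Fin 3 → ℝ) :
    nsq (B.mulVec v) ≤ (∑ i, ∑ j, B i j ^ 2) * nsq v := by
  unfold nsq Matrix.mulVec dotProduct
  rw [Finset.sum_mul]
  exact Finset.sum_le_sum fun i _ => Finset.sum_mul_sq_le_sq_mul_sq _ _ _

lemma nsq_smul (c : ℝ) (v : Fin 3 → ℝ) : nsq (c • v) = c ^ 2 * nsq v := by
  unfold nsq; rw [Finset.mul_sum]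
  exact Finset.sum_congr rfl fun i _ => by simp [mul_pow]

lemma recipVec_zero (h : Matrix (Fin 3) (Fin 3) ℝ) : recipVec h 0 = 0 := by
  unfold recipVec
  have : (fun i => (((0 : Fin 3 → ℤ) i : ℝ))) = (0 : Fin 3 → ℝ) := by funext i; simp
  rw [this, Matrix.mulVec_zero, smul_zero]

lemma nsq_zero : nsq 0 = 0 := by simp [nsq]

lemma recipVec_nsq_lower (h : Matrix (Fin 3) (Fin 3) ℝ) (hdet : 0 < h.det) :
    ∃ κ > 0, ∀ m : Fin 3 → ℤ, m ≠ 0 → κ ≤ nsq (recipVec h m) := by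
  have hu : IsUnit h.det := isUnit_iff_ne_zero.2 hdet.ne'
  have hmul : hᵀ * (h⁻¹)ᵀ = 1 := by
    rw [← Matrix.transpose_mul, Matrix.nonsing_inv_mul h hu, Matrix.transpose_one]
  set CF := ∑ i, ∑ j, hᵀ i j ^ 2 with hCFdef
  have claim : ∀ m : Fin 3 → ℤ, m ≠ 0 →
      1 ≤ CF * nsq ((h⁻¹)ᵀ.mulVec fun i => (m i : ℝ)) := by
    intro m hm
    set v : Fin 3 → ℝ := fun i => (m i : ℝ) with hv
    set u := (h⁻¹)ᵀ.mulVec v with hudef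
    have hvu : hᵀ.mulVec u = v := by
      rw [hudef, Matrix.mulVec_mulVec, hmul, Matrix.one_mulVec]
    have h1 : 1 ≤ nsq v := by
      obtain ⟨i, hi⟩ := Function.ne_iff.1 hm
      have h0 : (1 : ℝ) ≤ |(m i : ℝ)| := by
        rw [← Int.cast_abs]
        exact_mod_cast Int.one_le_abs (by simpa using hi)
      have h2 : (1 : ℝ) ≤ v i ^ 2 := by
        have := sq_abs (m i : ℝ); nlinarith
      exact h2.trans (Finset.single_le_sum (fun j _ => sq_nonneg (v j)) (Finset.mem_univ i))
    calc (1:ℝ) ≤ nsq v := h1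
      _ = nsq (hᵀ.mulVec u) := by rw [hvu]
      _ ≤ CF * nsq u := nsq_mulVec_le _ _
  have hCF : 0 < CF := by
    by_contra hc
    push_neg at hc
    have h1 := claim (fun _ => 1) (by intro hf; simpa using congrFun hf 0)
    nlinarith [nsq_nonneg ((h⁻¹)ᵀ.mulVec fun i => ((1 : ℤ) : ℝ))]
  refine ⟨(2 * π) ^ 2 / CF, by positivity, fun m hm => ?_⟩
  have h1 := claim m hm
  have h2 : nsq (recipVec h m) = (2 * π) ^ 2 * nsq ((h⁻¹)ᵀ.mulVec fun i => (m i : ℝ)) :=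
    nsq_smul _ _
  rw [div_le_iff₀ hCF, h2]
  nlinarith [sq_nonneg (2 * π)]

lemma normSq_structFactor_le {N : ℕ} (q : Fin N → ℝ) (r : Fin N → (Fin 3 → ℝ))
    (k : Fin 3 → ℝ) : Complex.normSq (structFactor q r k) ≤ (∑ i, |q i|) ^ 2 := by
  rw [← Complex.sq_norm]
  have h1 : ‖structFactor q r k‖ ≤ ∑ i, |q i| := by
    refine (norm_sum_le _ _).trans ?_
    refine Finset.sum_le_sum fun i _ => ?_
    rw [norm_mul, Complex.norm_exp]
    simp [Complex.norm_real]
  have h2 : 0 ≤ ‖structFactor q r k‖ := norm_nonneg _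
  nlinarith

lemma exp_comp {Ω : Type*} [MeasurableSpace Ω] (μ : Measure Ω) [IsProbabilityMeasure μ]
    {α : Type*} [Countable α] [MeasurableSpace α] [MeasurableSingletonClass α]
    (X : Ω → α) (hX : Measurable X) (f : α → ℝ) (B : ℝ) (hf : ∀ a, |f a| ≤ B) :
    ∫ ω, f (X ω) ∂μ = ∑' a, (μ (X ⁻¹' {a})).toReal * f a := by
  have hfm : Measurable f := measurable_of_countable f
  have : IsProbabilityMeasure (μ.map X) := Measure.isProbabilityMeasure_map hX.aemeasurable
  have hint : Integrable f (μ.map X) :=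
    (integrable_const B).mono' hfm.aestronglyMeasurable (ae_of_all _ fun a => by
      simpa [Real.norm_eq_abs] using hf a)
  rw [← integral_map hX.aemeasurable hfm.aestronglyMeasurable, integral_countable' hint]
  refine tsum_congr fun a => ?_
  rw [measureReal_def, Measure.map_apply hX (measurableSet_singleton a)]
  simp [mul_comm]

lemma memLp2_comp {Ω : Type*} [MeasurableSpace Ω] (μ : Measure Ω) [IsProbabilityMeasure μ]
    {α : Type*} [Countable α] [MeasurableSpace α] [MeasurableSingletonClass α]
    (X : Ω → α) (hX : Measurable X) (f : α → ℝ) (B : ℝ) (hf : ∀ a, |f a| ≤ B) :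
    MemLp (fun ω => f (X ω)) 2 μ :=
  MemLp.of_bound ((measurable_of_countable f).comp hX).aestronglyMeasurable B
    (ae_of_all _ fun ω => by simpa [Real.norm_eq_abs] using hf (X ω))

lemma law_S_pos {Ω : Type*} [MeasurableSpace Ω] (μpr : Measure Ω) [IsProbabilityMeasure μpr]
    (X : Ω → Fin 3 → ℤ) (hXm : Measurable X) (g : (Fin 3 → ℤ) → ℝ) (hg : ∀ m, 0 ≤ g m)
    (S : ℝ)
    (hlaw : ∀ m : Fin 3 → ℤ, μpr (X ⁻¹' {m}) = ENNReal.ofReal (if m = 0 then 0 else g m / S)) :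
    0 < S := by
  by_contra hc
  push_neg at hc
  have hcover : (Set.univ : Set Ω) = ⋃ m : Fin 3 → ℤ, X ⁻¹' {m} := by
    ext ω; simp
  have hdisj : Pairwise (Function.onFun Disjoint fun m : Fin 3 → ℤ => X ⁻¹' {m}) := by
    intro a b hab
    simp only [Function.onFun, Set.disjoint_left]
    intro ω ha hb
    simp only [Set.mem_preimage, Set.mem_singleton_iff] at ha hb
    exact hab (ha ▸ hb)
  have hmeas : ∀ m : Fin 3 → ℤ, MeasurableSet (X ⁻¹' {m}) :=
    fun m => hXm (measurableSet_singleton m)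
  have h1 : (1 : ENNReal) = ∑' m : Fin 3 → ℤ, μpr (X ⁻¹' {m}) := by
    rw [← measure_iUnion hdisj hmeas, ← hcover, measure_univ]
  have h2 : ∀ m : Fin 3 → ℤ, μpr (X ⁻¹' {m}) = 0 := by
    intro m
    rw [hlaw m]
    refine ENNReal.ofReal_eq_zero.2 ?_
    split_ifs with hm
    · exact le_refl 0
    · exact div_nonpos_iff.2 (Or.inl ⟨hg m, hc⟩)
  simp only [h2, tsum_zero] at h1
  exact one_ne_zero h1

noncomputable def auxF (h : Matrix (Fin 3) (Fin 3) ℝ) {N : ℕ} (q : Fin N → ℝ)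
    (r : Fin N → (Fin 3 → ℝ)) (m : Fin 3 → ℤ) : ℝ :=
  Complex.normSq (structFactor q r (recipVec h m)) / nsq (recipVec h m)

noncomputable def auxG (h : Matrix (Fin 3) (Fin 3) ℝ) {N : ℕ} (q : Fin N → ℝ)
    (r : Fin N → (Fin 3 → ℝ)) (μ ν : Fin 3) (m : Fin 3 → ℤ) : ℝ :=
  Complex.normSq (structFactor q r (recipVec h m)) * recipVec h m μ * recipVec h m ν /
    nsq (recipVec h m) ^ 2

lemma auxF_nonneg (h : Matrix (Fin 3) (Fin 3) ℝ) {N : ℕ} (q : Fin N → ℝ)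
    (r : Fin N → (Fin 3 → ℝ)) (m : Fin 3 → ℤ) : 0 ≤ auxF h q r m :=
  div_nonneg (Complex.normSq_nonneg _) (nsq_nonneg _)

lemma auxF_abs_le (h : Matrix (Fin 3) (Fin 3) ℝ) {N : ℕ} (q : Fin N → ℝ)
    (r : Fin N → (Fin 3 → ℝ)) {κ : ℝ} (hκpos : 0 < κ)
    (hκ : ∀ m : Fin 3 → ℤ, m ≠ 0 → κ ≤ nsq (recipVec h m)) (m : Fin 3 → ℤ) :
    |auxF h q r m| ≤ (∑ i, |q i|) ^ 2 / κ := by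
  by_cases hm : m = 0
  · subst hm
    unfold auxF
    rw [recipVec_zero, nsq_zero, div_zero, abs_zero]
    positivity
  · rw [abs_of_nonneg (auxF_nonneg h q r m)]
    exact div_le_div₀ (sq_nonneg _) (normSq_structFactor_le _ _ _) hκpos (hκ m hm)

lemma auxG_abs_le (h : Matrix (Fin 3) (Fin 3) ℝ) {N : ℕ} (q : Fin N → ℝ)
    (r : Fin N → (Fin 3 → ℝ)) {κ : ℝ} (hκpos : 0 < κ)
    (hκ : ∀ m : Fin 3 → ℤ, m ≠ 0 → κ ≤ nsq (recipVec h m)) (μ ν : Fin 3) (m : Fin 3 → ℤ) :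
    |auxG h q r μ ν m| ≤ (∑ i, |q i|) ^ 2 / κ := by
  by_cases hm : m = 0
  · subst hm
    unfold auxG
    rw [recipVec_zero, nsq_zero]
    norm_num
    positivity
  · set n := nsq (recipVec h m) with hn
    have hnpos : 0 < n := lt_of_lt_of_le hκpos (hκ m hm)
    set a := Complex.normSq (structFactor q r (recipVec h m)) with ha
    have ha0 : 0 ≤ a := Complex.normSq_nonneg _
    set kμ := recipVec h m μ
    set kν := recipVec h m ν
    have hkk : |kμ * kν| ≤ n := by
      rw [abs_mul]
      nlinarith [sq_le_nsq (recipVec h m) μ, sq_le_nsq (recipVec h m) ν,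
        sq_abs kμ, sq_abs kν, abs_nonneg kμ, abs_nonneg kν,
        sq_nonneg (|kμ| - |kν|)]
    have haq : a ≤ (∑ i, |q i|) ^ 2 := normSq_structFactor_le _ _ _
    have h1 : |auxG h q r μ ν m| = |a * kμ * kν| / n ^ 2 := by
      unfold auxG
      rw [abs_div, abs_of_nonneg (by positivity : (0:ℝ) ≤ n ^ 2)]
    rw [h1]
    have h2 : |a * kμ * kν| ≤ (∑ i, |q i|) ^ 2 * n := by
      rw [mul_assoc, abs_mul, abs_of_nonneg ha0]
      exact mul_le_mul haq hkk (abs_nonneg _) (sq_nonneg _)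
    calc |a * kμ * kν| / n ^ 2 ≤ ((∑ i, |q i|) ^ 2 * n) / n ^ 2 :=
          div_le_div₀ (by positivity) h2 (by positivity) le_rfl
      _ = (∑ i, |q i|) ^ 2 / n := by
          field_simp
      _ ≤ (∑ i, |q i|) ^ 2 / κ :=
          div_le_div₀ (sq_nonneg _) le_rfl hκpos (hκ m hm)

lemma radWeight_nonneg (h : Matrix (Fin 3) (Fin 3) ℝ) {M : ℕ} (w s : Fin M → ℝ)
    (hw : ∀ ℓ, 0 < w ℓ) (hs : ∀ ℓ, 0 < s ℓ) (m : Fin 3 → ℤ) : 0 ≤ radWeight h w s m := by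
  refine Finset.sum_nonneg fun ℓ _ => ?_
  have h1 := hw ℓ; have h2 := hs ℓ; have h3 := nsq_nonneg (recipVec h m)
  have h4 := Real.exp_pos (-s ℓ ^ 2 * nsq (recipVec h m) / 4)
  have h5 : (0:ℝ) < π ^ ((3:ℝ)/2) := Real.rpow_pos_of_pos Real.pi_pos _
  positivity

lemma nradWeight_nonneg (h : Matrix (Fin 3) (Fin 3) ℝ) {M : ℕ} (w s : Fin M → ℝ)
    (hw : ∀ ℓ, 0 < w ℓ) (hs : ∀ ℓ, 0 < s ℓ) (m : Fin 3 → ℤ) : 0 ≤ nradWeight h w s m := by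
  refine Finset.sum_nonneg fun ℓ _ => ?_
  have h1 := hw ℓ; have h2 := hs ℓ; have h3 := nsq_nonneg (recipVec h m)
  have h4 := Real.exp_pos (-s ℓ ^ 2 * nsq (recipVec h m) / 4)
  have h5 : (0:ℝ) < π ^ ((3:ℝ)/2) := Real.rpow_pos_of_pos Real.pi_pos _
  positivity

lemma radWeight_fac (h : Matrix (Fin 3) (Fin 3) ℝ) {M : ℕ} (w s : Fin M → ℝ) (m : Fin 3 → ℤ) :
    radWeight h w s m = nsq (recipVec h m) *
      ∑ ℓ, π ^ ((3 : ℝ) / 2) * w ℓ * s ℓ ^ 5 * Real.exp (-s ℓ ^ 2 * nsq (recipVec h m) / 4) := by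
  unfold radWeight
  rw [Finset.mul_sum]
  exact Finset.sum_congr rfl fun ℓ _ => by ring

lemma nradWeight_fac (h : Matrix (Fin 3) (Fin 3) ℝ) {M : ℕ} (w s : Fin M → ℝ) (m : Fin 3 → ℤ) :
    nradWeight h w s m = nsq (recipVec h m) ^ 2 *
      ∑ ℓ, π ^ ((3 : ℝ) / 2) * w ℓ * s ℓ ^ 7 * Real.exp (-s ℓ ^ 2 * nsq (recipVec h m) / 4) := by
  unfold nradWeight
  rw [Finset.mul_sum]
  exact Finset.sum_congr rfl fun ℓ _ => by ring

lemma radWeight_fac' (h : Matrix (Fin 3) (Fin 3) ℝ) {M : ℕ} (w s : Fin M → ℝ) (m : Fin 3 → ℤ) :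
    radWeight h w s m = nsq (recipVec h m) * (π ^ ((3 : ℝ) / 2) *
      ∑ ℓ, w ℓ * s ℓ ^ 5 * Real.exp (-s ℓ ^ 2 * nsq (recipVec h m) / 4)) := by
  unfold radWeight
  simp only [Finset.mul_sum]
  exact Finset.sum_congr rfl fun ℓ _ => by ring

lemma nradWeight_fac' (h : Matrix (Fin 3) (Fin 3) ℝ) {M : ℕ} (w s : Fin M → ℝ) (m : Fin 3 → ℤ) :
    nradWeight h w s m = nsq (recipVec h m) ^ 2 * (π ^ ((3 : ℝ) / 2) *
      ∑ ℓ, w ℓ * s ℓ ^ 7 * Real.exp (-s ℓ ^ 2 * nsq (recipVec h m) / 4)) := by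
  unfold nradWeight
  simp only [Finset.mul_sum]
  exact Finset.sum_congr rfl fun ℓ _ => by ring

set_option maxHeartbeats 1000000 in
/-- The random batch pressure estimator fluctuation `χ` has mean zero,
and its component variances satisfy the explicit `O(1/P)` bound of Proposition 4. -/
theorem stmt_12 (h : Matrix (Fin 3) (Fin 3) ℝ) (hdet : 0 < h.det)
    (N : ℕ) (q : Fin N → ℝ) (hq : ∑ i, q i = 0) (r : Fin N → (Fin 3 → ℝ))
    (M : ℕ) (w s : Fin M → ℝ) (hw : ∀ ℓ, 0 < w ℓ) (hs : ∀ ℓ, 0 < s ℓ)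
    (P : ℕ) (hP : 0 < P)
    (Ω : Type*) [MeasurableSpace Ω] (μpr : Measure Ω) [IsProbabilityMeasure μpr]
    (kr knr : Fin P → Ω → (Fin 3 → ℤ))
    (hkrm : ∀ p, Measurable (kr p)) (hknrm : ∀ p, Measurable (knr p))
    (hlawr : ∀ p (m : Fin 3 → ℤ), μpr (kr p ⁻¹' {m}) =
      ENNReal.ofReal (if m = 0 then 0 else radWeight h w s m / Sr h w s))
    (hlawnr : ∀ p (m : Fin 3 → ℤ), μpr (knr p ⁻¹' {m}) =
      ENNReal.ofReal (if m = 0 then 0 else nradWeight h w s m / Snr h w s))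
    (hindep : iIndepFun
      (Sum.elim kr knr) μpr) :
    ∀ μ ν : Fin 3,
      (∫ ω, chi h q r w s kr knr μ ν ω ∂μpr) = 0 ∧
      (∫ ω, (chi h q r w s kr knr μ ν ω) ^ 2 ∂μpr) ≤
        ((if μ = ν then 1 else 0) / P) *
            (π ^ ((3 : ℝ) / 2) * Sr h w s / h.det ^ 4 *
                (∑' m : Fin 3 → ℤ,
                  if m = 0 then 0 else
                    (∑ ℓ, w ℓ * s ℓ ^ 5 * Real.exp (-s ℓ ^ 2 * nsq (recipVec h m) / 4)) *
                      Complex.normSq (structFactor q r (recipVec h m)) ^ 2 /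
                        nsq (recipVec h m)) -
              (PFr h q r w s μ ν) ^ 2) +
          (1 / P) *
            (π ^ ((3 : ℝ) / 2) * Snr h w s / (36 * h.det ^ 4) *
                (∑' m : Fin 3 → ℤ,
                  if m = 0 then 0 else
                    (∑ ℓ, w ℓ * s ℓ ^ 7 * Real.exp (-s ℓ ^ 2 * nsq (recipVec h m) / 4)) *
                      Complex.normSq (structFactor q r (recipVec h m)) ^ 2 *
                        recipVec h m μ ^ 2 * recipVec h m ν ^ 2 /
                          nsq (recipVec h m) ^ 2) -
              (PFnr h q r w s μ ν) ^ 2) := by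
  intro μ ν
  have hdet0 : h.det ≠ 0 := hdet.ne'
  have hPR : (0:ℝ) < (P:ℝ) := by exact_mod_cast hP
  have hPne : (P:ℝ) ≠ 0 := hPR.ne'
  obtain ⟨κ, hκpos, hκ⟩ := recipVec_nsq_lower h hdet
  set Q : ℝ := ∑ i, |q i| with hQdef
  have hSrpos : 0 < Sr h w s :=
    law_S_pos μpr (kr ⟨0, hP⟩) (hkrm _) (radWeight h w s)
      (radWeight_nonneg h w s hw hs) _ (hlawr ⟨0, hP⟩)
  have hSnrpos : 0 < Snr h w s :=
    law_S_pos μpr (knr ⟨0, hP⟩) (hknrm _) (nradWeight h w s)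
      (nradWeight_nonneg h w s hw hs) _ (hlawnr ⟨0, hP⟩)
  set pr : (Fin 3 → ℤ) → ℝ :=
    fun m => if m = 0 then 0 else radWeight h w s m / Sr h w s with hprdef
  set pn : (Fin 3 → ℤ) → ℝ :=
    fun m => if m = 0 then 0 else nradWeight h w s m / Snr h w s with hpndef
  have hprtoReal : ∀ (p : Fin P) m, (μpr (kr p ⁻¹' {m})).toReal = pr m := by
    intro p m
    rw [hlawr p m, ENNReal.toReal_ofReal, hprdef]
    split_ifs with hm
    · exact le_refl 0
    · exact div_nonneg (radWeight_nonneg h w s hw hs m) hSrpos.le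
  have hpntoReal : ∀ (p : Fin P) m, (μpr (knr p ⁻¹' {m})).toReal = pn m := by
    intro p m
    rw [hlawnr p m, ENNReal.toReal_ofReal, hpndef]
    split_ifs with hm
    · exact le_refl 0
    · exact div_nonneg (nradWeight_nonneg h w s hw hs m) hSnrpos.le
  -- bounds
  have hFb : ∀ m, |auxF h q r m| ≤ Q ^ 2 / κ := auxF_abs_le h q r hκpos hκ
  have hGb : ∀ m, |auxG h q r μ ν m| ≤ Q ^ 2 / κ := auxG_abs_le h q r hκpos hκ μ ν
  have hF2b : ∀ m, |auxF h q r m ^ 2| ≤ (Q ^ 2 / κ) ^ 2 := fun m => by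
    rw [abs_pow]; exact pow_le_pow_left₀ (abs_nonneg _) (hFb m) 2
  have hG2b : ∀ m, |auxG h q r μ ν m ^ 2| ≤ (Q ^ 2 / κ) ^ 2 := fun m => by
    rw [abs_pow]; exact pow_le_pow_left₀ (abs_nonneg _) (hGb m) 2
  -- expectations
  have hEF : ∀ p, ∫ ω, auxF h q r (kr p ω) ∂μpr = ∑' m, pr m * auxF h q r m :=
    fun p => (exp_comp μpr (kr p) (hkrm p) (auxF h q r) _ hFb).trans
      (tsum_congr fun m => by rw [hprtoReal p m])
  have hEF2 : ∀ p, ∫ ω, auxF h q r (kr p ω) ^ 2 ∂μpr = ∑' m, pr m * auxF h q r m ^ 2 :=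
    fun p => (exp_comp μpr (kr p) (hkrm p) (fun m => auxF h q r m ^ 2) _ hF2b).trans
      (tsum_congr fun m => by rw [hprtoReal p m])
  have hEG : ∀ p, ∫ ω, auxG h q r μ ν (knr p ω) ∂μpr = ∑' m, pn m * auxG h q r μ ν m :=
    fun p => (exp_comp μpr (knr p) (hknrm p) (auxG h q r μ ν) _ hGb).trans
      (tsum_congr fun m => by rw [hpntoReal p m])
  have hEG2 : ∀ p, ∫ ω, auxG h q r μ ν (knr p ω) ^ 2 ∂μpr
      = ∑' m, pn m * auxG h q r μ ν m ^ 2 :=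
    fun p => (exp_comp μpr (knr p) (hknrm p) (fun m => auxG h q r μ ν m ^ 2) _ hG2b).trans
      (tsum_congr fun m => by rw [hpntoReal p m])
  -- constants and random variables
  set δv : ℝ := if μ = ν then 1 else 0 with hδdef
  set cr : ℝ := δv * (Sr h w s / (4 * h.det ^ 2)) with hcrdef
  set cnr : ℝ := -(Snr h w s / (8 * h.det ^ 2)) with hcnrdef
  set φ : (Fin P ⊕ Fin P) → (Fin 3 → ℤ) → ℝ :=
    Sum.elim (fun _ m => cr / (P:ℝ) * auxF h q r m)
      (fun _ m => cnr / (P:ℝ) * auxG h q r μ ν m) with hφdef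
  set Z : (Fin P ⊕ Fin P) → Ω → ℝ := fun i => φ i ∘ Sum.elim kr knr i with hZdef
  have hZl : ∀ p : Fin P, Z (Sum.inl p) = fun ω => cr / (P:ℝ) * auxF h q r (kr p ω) := by
    intro p; rw [hZdef, hφdef]; rfl
  have hZr : ∀ p : Fin P, Z (Sum.inr p) = fun ω => cnr / (P:ℝ) * auxG h q r μ ν (knr p ω) := by
    intro p; rw [hZdef, hφdef]; rfl
  have hφm : ∀ i, Measurable (φ i) := fun i => measurable_of_countable _
  have hZindep : iIndepFun Z μpr := by
    rw [hZdef]; exact hindep.comp φ hφm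
  have hZmem : ∀ i, MemLp (Z i) 2 μpr := by
    intro i
    match i with
    | Sum.inl p =>
      rw [hZl p]
      exact memLp2_comp μpr (kr p) (hkrm p) (fun m => cr / (P:ℝ) * auxF h q r m)
        (|cr / (P:ℝ)| * (Q ^ 2 / κ)) (fun m => by
          rw [abs_mul]; exact mul_le_mul_of_nonneg_left (hFb m) (abs_nonneg _))
    | Sum.inr p =>
      rw [hZr p]
      exact memLp2_comp μpr (knr p) (hknrm p) (fun m => cnr / (P:ℝ) * auxG h q r μ ν m)
        (|cnr / (P:ℝ)| * (Q ^ 2 / κ)) (fun m => by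
          rw [abs_mul]; exact mul_le_mul_of_nonneg_left (hGb m) (abs_nonneg _))
  have hZint : ∀ i, Integrable (Z i) μpr := fun i => (hZmem i).integrable one_le_two
  have hZEl : ∀ p, ∫ ω, Z (Sum.inl p) ω ∂μpr
      = cr / (P:ℝ) * ∑' m, pr m * auxF h q r m := by
    intro p
    simp only [hZl p]
    rw [integral_const_mul, hEF p]
  have hZEr : ∀ p, ∫ ω, Z (Sum.inr p) ω ∂μpr
      = cnr / (P:ℝ) * ∑' m, pn m * auxG h q r μ ν m := by
    intro p
    simp only [hZr p]
    rw [integral_const_mul, hEG p]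
  have hZE2l : ∀ p, ∫ ω, Z (Sum.inl p) ω ^ 2 ∂μpr
      = (cr / (P:ℝ)) ^ 2 * ∑' m, pr m * auxF h q r m ^ 2 := by
    intro p
    simp only [hZl p, mul_pow]
    rw [integral_const_mul, hEF2 p]
  have hZE2r : ∀ p, ∫ ω, Z (Sum.inr p) ω ^ 2 ∂μpr
      = (cnr / (P:ℝ)) ^ 2 * ∑' m, pn m * auxG h q r μ ν m ^ 2 := by
    intro p
    simp only [hZr p, mul_pow]
    rw [integral_const_mul, hEG2 p]
  -- key tsum identities
  have hA : cr * (∑' m, pr m * auxF h q r m) = PFr h q r w s μ ν := by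
    rw [← tsum_mul_left]
    simp only [PFr]
    rw [← tsum_mul_left]
    refine tsum_congr fun m => ?_
    by_cases hm : m = 0
    · simp [hprdef, hm]
    · have hnne : nsq (recipVec h m) ≠ 0 := (lt_of_lt_of_le hκpos (hκ m hm)).ne'
      simp only [hprdef, if_neg hm, auxF, hcrdef, hδdef]
      rw [radWeight_fac]
      generalize (∑ ℓ, π ^ ((3 : ℝ) / 2) * w ℓ * s ℓ ^ 5 *
        Real.exp (-s ℓ ^ 2 * nsq (recipVec h m) / 4)) = A
      field_simp
  have hB : cnr * (∑' m, pn m * auxG h q r μ ν m) = PFnr h q r w s μ ν := by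
    rw [← tsum_mul_left]
    simp only [PFnr]
    rw [← tsum_mul_left]
    refine tsum_congr fun m => ?_
    by_cases hm : m = 0
    · simp [hpndef, hm]
    · have hnne : nsq (recipVec h m) ≠ 0 := (lt_of_lt_of_le hκpos (hκ m hm)).ne'
      simp only [hpndef, if_neg hm, auxG, hcnrdef]
      rw [nradWeight_fac]
      generalize (∑ ℓ, π ^ ((3 : ℝ) / 2) * w ℓ * s ℓ ^ 7 *
        Real.exp (-s ℓ ^ 2 * nsq (recipVec h m) / 4)) = A
      field_simp
  have hsumZ : ∑ i : Fin P ⊕ Fin P, ∫ ω, Z i ω ∂μpr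
      = PFr h q r w s μ ν + PFnr h q r w s μ ν := by
    rw [Fintype.sum_sum_type]
    simp only [hZEl, hZEr, Finset.sum_const, Finset.card_univ, Fintype.card_fin, nsmul_eq_mul]
    rw [← hA, ← hB]
    field_simp
  have hchiω : ∀ ω, chi h q r w s kr knr μ ν ω
      = (PFr h q r w s μ ν + PFnr h q r w s μ ν) - ∑ i, Z i ω := by
    intro ω
    have e1 : δv * (Sr h w s / (4 * h.det ^ 2 * (P:ℝ))) = cr / (P:ℝ) := by
      rw [hcrdef]; field_simp
    have e2 : -(Snr h w s / (8 * h.det ^ 2 * (P:ℝ))) = cnr / (P:ℝ) := by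
      rw [hcnrdef]; field_simp
    simp only [chi]
    rw [Fintype.sum_sum_type]
    simp only [hZl, hZr]
    rw [← Finset.mul_sum, ← Finset.mul_sum, ← hδdef, e1, e2]
    simp only [auxF, auxG]
    ring
  set T1 := (∑' m : Fin 3 → ℤ,
      if m = 0 then 0 else
        (∑ ℓ, w ℓ * s ℓ ^ 5 * Real.exp (-s ℓ ^ 2 * nsq (recipVec h m) / 4)) *
          Complex.normSq (structFactor q r (recipVec h m)) ^ 2 /
            nsq (recipVec h m)) with hT1def
  set T2 := (∑' m : Fin 3 → ℤ,
      if m = 0 then 0 else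
        (∑ ℓ, w ℓ * s ℓ ^ 7 * Real.exp (-s ℓ ^ 2 * nsq (recipVec h m) / 4)) *
          Complex.normSq (structFactor q r (recipVec h m)) ^ 2 *
            recipVec h m μ ^ 2 * recipVec h m ν ^ 2 /
              nsq (recipVec h m) ^ 2) with hT2def
  have hT1nn : 0 ≤ T1 := by
    rw [hT1def]
    refine tsum_nonneg fun m => ?_
    by_cases hm : m = 0
    · simp [hm]
    · rw [if_neg hm]
      refine div_nonneg (mul_nonneg (Finset.sum_nonneg fun ℓ _ => ?_) (sq_nonneg _))
        (nsq_nonneg _)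
      have h1 := (hw ℓ).le; have h2 := (hs ℓ).le
      positivity
  have hT2nn : 0 ≤ T2 := by
    rw [hT2def]
    refine tsum_nonneg fun m => ?_
    by_cases hm : m = 0
    · simp [hm]
    · rw [if_neg hm]
      refine div_nonneg (mul_nonneg (mul_nonneg (mul_nonneg
        (Finset.sum_nonneg fun ℓ _ => ?_) (sq_nonneg _)) (sq_nonneg _)) (sq_nonneg _))
        (sq_nonneg _)
      have h1 := (hw ℓ).le; have h2 := (hs ℓ).le
      positivity
  have hC : cr ^ 2 * (∑' m, pr m * auxF h q r m ^ 2)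
      = δv / 16 * (π ^ ((3:ℝ)/2) * Sr h w s / h.det ^ 4 * T1) := by
    rw [hT1def, ← mul_assoc, ← tsum_mul_left, ← tsum_mul_left]
    refine tsum_congr fun m => ?_
    by_cases hm : m = 0
    · simp [hprdef, hm]
    · have hnne : nsq (recipVec h m) ≠ 0 := (lt_of_lt_of_le hκpos (hκ m hm)).ne'
      simp only [hprdef, if_neg hm, auxF, hcrdef, hδdef]
      rw [radWeight_fac']
      generalize (∑ ℓ, w ℓ * s ℓ ^ 5 * Real.exp (-s ℓ ^ 2 * nsq (recipVec h m) / 4)) = A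
      rcases eq_or_ne μ ν with e | e
      · simp only [if_pos e]
        field_simp
        ring
      · simp [if_neg e]
  have hD : cnr ^ 2 * (∑' m, pn m * auxG h q r μ ν m ^ 2)
      = 9 / 16 * (π ^ ((3:ℝ)/2) * Snr h w s / (36 * h.det ^ 4) * T2) := by
    rw [hT2def, ← mul_assoc, ← tsum_mul_left, ← tsum_mul_left]
    refine tsum_congr fun m => ?_
    by_cases hm : m = 0
    · simp [hpndef, hm]
    · have hnne : nsq (recipVec h m) ≠ 0 := (lt_of_lt_of_le hκpos (hκ m hm)).ne'
      simp only [hpndef, if_neg hm, auxG, hcnrdef]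
      rw [nradWeight_fac']
      generalize (∑ ℓ, w ℓ * s ℓ ^ 7 * Real.exp (-s ℓ ^ 2 * nsq (recipVec h m) / 4)) = A
      field_simp
      ring
  refine ⟨?_, ?_⟩
  · have e : ∫ ω, chi h q r w s kr knr μ ν ω ∂μpr
        = ∫ ω, ((PFr h q r w s μ ν + PFnr h q r w s μ ν) - ∑ i, Z i ω) ∂μpr :=
      integral_congr_ae (ae_of_all _ fun ω => by rw [hchiω ω])
    rw [e, integral_sub (integrable_const _) (integrable_finset_sum _ fun i _ => hZint i),
      integral_finset_sum _ (fun i _ => hZint i), hsumZ, integral_const, probReal_univ,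
      one_smul, sub_self]
  · have hSmem : MemLp (∑ i, Z i) 2 μpr := memLp_finset_sum' _ fun i _ => hZmem i
    have hintS' : ∫ ω, ∑ i, Z i ω ∂μpr = PFr h q r w s μ ν + PFnr h q r w s μ ν := by
      rw [integral_finset_sum _ (fun i _ => hZint i), hsumZ]
    have hchisq : ∫ ω, chi h q r w s kr knr μ ν ω ^ 2 ∂μpr = variance (∑ i, Z i) μpr := by
      rw [variance_eq_integral hSmem.aemeasurable]
      refine integral_congr_ae (ae_of_all _ fun ω => ?_)
      simp only [Pi.pow_apply, Pi.sub_apply, Finset.sum_apply, hintS']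
      rw [hchiω ω]
      ring
    have hVl : ∀ p : Fin P, variance (Z (Sum.inl p)) μpr
        = (cr / (P:ℝ)) ^ 2 * (∑' m, pr m * auxF h q r m ^ 2)
          - (cr / (P:ℝ) * ∑' m, pr m * auxF h q r m) ^ 2 := by
      intro p
      rw [variance_eq_sub (hZmem (Sum.inl p))]
      have e2 : μpr[Z (Sum.inl p) ^ 2] = ∫ ω, Z (Sum.inl p) ω ^ 2 ∂μpr :=
        integral_congr_ae (ae_of_all _ fun ω => by simp [Pi.pow_apply])
      rw [e2, hZE2l p, hZEl p]
    have hVr : ∀ p : Fin P, variance (Z (Sum.inr p)) μpr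
        = (cnr / (P:ℝ)) ^ 2 * (∑' m, pn m * auxG h q r μ ν m ^ 2)
          - (cnr / (P:ℝ) * ∑' m, pn m * auxG h q r μ ν m) ^ 2 := by
      intro p
      rw [variance_eq_sub (hZmem (Sum.inr p))]
      have e2 : μpr[Z (Sum.inr p) ^ 2] = ∫ ω, Z (Sum.inr p) ω ^ 2 ∂μpr :=
        integral_congr_ae (ae_of_all _ fun ω => by simp [Pi.pow_apply])
      rw [e2, hZE2r p, hZEr p]
    have hvs : variance (∑ i, Z i) μpr = ∑ i, variance (Z i) μpr :=
      IndepFun.variance_sum (fun i _ => hZmem i) (fun i _ j _ hij => hZindep.indepFun hij)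
    have hsumvar : ∑ i : Fin P ⊕ Fin P, variance (Z i) μpr
        = ((cr ^ 2 * (∑' m, pr m * auxF h q r m ^ 2)
              - (cr * ∑' m, pr m * auxF h q r m) ^ 2)
            + (cnr ^ 2 * (∑' m, pn m * auxG h q r μ ν m ^ 2)
              - (cnr * ∑' m, pn m * auxG h q r μ ν m) ^ 2)) / (P:ℝ) := by
      rw [Fintype.sum_sum_type]
      simp only [hVl, hVr, Finset.sum_const, Finset.card_univ, Fintype.card_fin, nsmul_eq_mul]
      field_simp
    rw [hchisq, hvs, hsumvar, ← hA, ← hB]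
    set SS0 := ∑' m, pr m * auxF h q r m with hSS0
    set SS1 := ∑' m, pr m * auxF h q r m ^ 2 with hSS1
    set SS2 := ∑' m, pn m * auxG h q r μ ν m with hSS2
    set SS3 := ∑' m, pn m * auxG h q r μ ν m ^ 2 with hSS3
    have hδ01 : δv = 0 ∨ δv = 1 := by rw [hδdef]; split_ifs <;> simp
    have hpipos : (0:ℝ) < π ^ ((3:ℝ)/2) := Real.rpow_pos_of_pos Real.pi_pos _
    have hX1nn : 0 ≤ π ^ ((3:ℝ)/2) * Sr h w s / h.det ^ 4 * T1 :=
      mul_nonneg (div_nonneg (mul_nonneg hpipos.le hSrpos.le) (by positivity)) hT1nn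
    have hX2nn : 0 ≤ π ^ ((3:ℝ)/2) * Snr h w s / (36 * h.det ^ 4) * T2 :=
      mul_nonneg (div_nonneg (mul_nonneg hpipos.le hSnrpos.le) (by positivity)) hT2nn
    have key1 : cr ^ 2 * SS1 ≤ δv * (π ^ ((3:ℝ)/2) * Sr h w s / h.det ^ 4 * T1) := by
      rw [hC]; rcases hδ01 with e | e <;> rw [e] <;> nlinarith [hX1nn]
    have key2 : cnr ^ 2 * SS3 ≤ π ^ ((3:ℝ)/2) * Snr h w s / (36 * h.det ^ 4) * T2 := by
      rw [hD]; nlinarith [hX2nn]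
    have key3 : δv * (cr * SS0) ^ 2 ≤ (cr * SS0) ^ 2 := by
      rcases hδ01 with e | e <;> rw [e] <;> nlinarith [sq_nonneg (cr * SS0)]
    have step1 : (cr ^ 2 * SS1 - (cr * SS0) ^ 2 + (cnr ^ 2 * SS3 - (cnr * SS2) ^ 2)) / (P:ℝ)
        ≤ ((δv * (π ^ ((3:ℝ)/2) * Sr h w s / h.det ^ 4 * T1) - δv * (cr * SS0) ^ 2)
            + (π ^ ((3:ℝ)/2) * Snr h w s / (36 * h.det ^ 4) * T2 - (cnr * SS2) ^ 2)) / (P:ℝ) := by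
      gcongr
    have step2 : ((δv * (π ^ ((3:ℝ)/2) * Sr h w s / h.det ^ 4 * T1) - δv * (cr * SS0) ^ 2)
            + (π ^ ((3:ℝ)/2) * Snr h w s / (36 * h.det ^ 4) * T2 - (cnr * SS2) ^ 2)) / (P:ℝ)
        = δv / (P:ℝ) * (π ^ ((3:ℝ)/2) * Sr h w s / h.det ^ 4 * T1 - (cr * SS0) ^ 2)
          + 1 / (P:ℝ) * (π ^ ((3:ℝ)/2) * Snr h w s / (36 * h.det ^ 4) * T2 - (cnr * SS2) ^ 2) := by
      field_simp
    linarith [step1, step2]
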